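/- Let p ∈ (0,1) and define g(q) = D(q‖p)/(1−q) for q ∈ (0,p). Then g is strictly decreasing on (0,p); equivalently, the function λ ↦ (1+λ)·D(λ/(1+λ) ‖ p) is strictly decreasing in λ on the interval (0, p/(1−p)). -/

import Mathlib

/-- The binary Kullback–Leibler divergence `D(q‖p)` (natural logarithms). -/
noncomputable def klBin (q p : ℝ) : ℝ :=
  q * Real.log (q / p) + (1 - q) * Real.log ((1 - q) / (1 - p))

/-! In the variable `λ = q / (1 - q)` the function becomes
`λ log λ - (1 + λ) log (1 + λ) - λ log p - log (1 - p)`, whose derivative `log (λ / ((1 + λ) p))`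
is negative exactly when `λ / (1 + λ) < p`, i.e. `λ < p / (1 - p)`. The `q`-form follows by
composing with the increasing map `q ↦ q / (1 - q)`, which sends `(0, p)` into `(0, p / (1 - p))`. -/

open Real Set

lemma one_add_mul_klBin_div_one_add {l p : ℝ} (hl : l ≠ 0) (hl1 : 1 + l ≠ 0) (hp : p ≠ 0)
    (hp1 : 1 - p ≠ 0) :
    (1 + l) * klBin (l / (1 + l)) p =
      l * log l - (1 + l) * log (1 + l) - l * log p - log (1 - p) := by
  have h : 1 - l / (1 + l) = (1 + l)⁻¹ := by field_simp; ring
  rw [klBin, h, log_div (div_ne_zero hl hl1) hp, log_div (inv_ne_zero hl1) hp1, log_div hl hl1,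
    log_inv]
  field_simp
  ring

lemma hasDerivAt_mul_log_sub_one_add_mul_log {l : ℝ} (hl : l ≠ 0) (hl1 : 1 + l ≠ 0) (c d : ℝ) :
    HasDerivAt (fun x => x * log x - (1 + x) * log (1 + x) - x * c - d)
      (log l - log (1 + l) - c) l := by
  have h1 : HasDerivAt (fun x => (1 + x) * log (1 + x)) (log (1 + l) + 1) l := by
    simpa [Function.comp_def] using
      (hasDerivAt_mul_log hl1).comp l ((hasDerivAt_id l).const_add 1)
  exact ((((hasDerivAt_mul_log hl).sub h1).sub ((hasDerivAt_id l).mul_const c)).sub_const d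
    ).congr_deriv (by ring)

lemma strictAntiOn_one_add_mul_klBin {p : ℝ} (hp0 : 0 < p) (hp1 : p < 1) :
    StrictAntiOn (fun l : ℝ => (1 + l) * klBin (l / (1 + l)) p) (Ioo 0 (p / (1 - p))) := by
  have hderiv : ∀ l ∈ Ioo 0 (p / (1 - p)),
      HasDerivAt (fun x => x * log x - (1 + x) * log (1 + x) - x * log p - log (1 - p))
        (log l - log (1 + l) - log p) l := fun l hl =>
    hasDerivAt_mul_log_sub_one_add_mul_log hl.1.ne' (by linarith [hl.1]) _ _
  refine (strictAntiOn_of_hasDerivWithinAt_neg (convex_Ioo _ _)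
    (fun l hl => (hderiv l hl).continuousAt.continuousWithinAt)
    (fun l hl => (hderiv l (interior_subset hl)).hasDerivWithinAt) ?_).congr ?_
  · rw [interior_Ioo]
    rintro l ⟨hl0, hlP⟩
    have hlt : l < p * (1 + l) := by
      rw [lt_div_iff₀ (by linarith)] at hlP
      linarith
    have := log_lt_log hl0 hlt
    rw [log_mul hp0.ne' (by linarith)] at this
    linarith
  · intro l hl
    exact (one_add_mul_klBin_div_one_add hl.1.ne' (by linarith [hl.1]) hp0.ne'
      (by linarith)).symm

lemma strictMonoOn_div_one_sub : StrictMonoOn (fun q : ℝ => q / (1 - q)) (Iio 1) := by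
  intro a ha b hb hab
  rw [mem_Iio] at ha hb
  rw [div_lt_div_iff₀ (by linarith) (by linarith)]
  nlinarith

lemma strictAntiOn_klBin_div_one_sub {p : ℝ} (hp0 : 0 < p) (hp1 : p < 1) :
    StrictAntiOn (fun q : ℝ => klBin q p / (1 - q)) (Ioo 0 p) := by
  have hmaps : MapsTo (fun q : ℝ => q / (1 - q)) (Ioo 0 p) (Ioo 0 (p / (1 - p))) := by
    rintro q ⟨hq0, hqp⟩
    exact ⟨div_pos hq0 (by linarith), strictMonoOn_div_one_sub (mem_Iio.2 (hqp.trans hp1))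
      (mem_Iio.2 hp1) hqp⟩
  refine ((strictAntiOn_one_add_mul_klBin hp0 hp1).comp_strictMonoOn
    (strictMonoOn_div_one_sub.mono fun q hq => mem_Iio.2 (hq.2.trans hp1)) hmaps).congr
    fun q hq => ?_
  have hq1 : 1 - q ≠ 0 := by linarith [hq.2]
  have h : 1 + q / (1 - q) = (1 - q)⁻¹ := by field_simp; ring
  simp only [Function.comp_apply, h, div_inv_eq_mul, div_mul_cancel₀ _ hq1]
  ring

/-- For `p ∈ (0,1)`, the map `q ↦ D(q‖p)/(1−q)` is strictly decreasing
on `(0,p)`; equivalently, `λ ↦ (1+λ)·D(λ/(1+λ) ‖ p)` is strictly decreasing on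
`(0, p/(1−p))`. -/
theorem stmt6 (p : ℝ) (hp0 : 0 < p) (hp1 : p < 1) :
    StrictAntiOn (fun q : ℝ => klBin q p / (1 - q)) (Set.Ioo 0 p) ∧
    StrictAntiOn (fun l : ℝ => (1 + l) * klBin (l / (1 + l)) p)
      (Set.Ioo 0 (p / (1 - p))) :=
  ⟨strictAntiOn_klBin_div_one_sub hp0 hp1, strictAntiOn_one_add_mul_klBin hp0 hp1⟩
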